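/- Let g be a Lie triple system over an infinite field F with char F ≠ 2, 3, ω : g × g × g → g a trilinear map such that [x,y,z]_λ := [x,y,z] + λ·ω(x,y,z) is a Lie triple system bracket for every λ ∈ F, and N : g → g a linear map such that φ_λ := id + λN satisfies φ_λ([x,y,z]_λ) = [φ_λ(x), φ_λ(y), φ_λ(z)] for all x,y,z ∈ g and all λ ∈ F. Then for all x1,x2,x3 ∈ g: (1) ω(x1,x2,x3) = [Nx1,x2,x3] + [x1,Nx2,x3] + [x1,x2,Nx3] − N[x1,x2,x3]; (2) N(ω(x1,x2,x3)) = [Nx1,Nx2,x3] + [Nx1,x2,Nx3] + [x1,Nx2,Nx3]; and (3) [Nx1,Nx2,Nx3] = 0. In particular N is a Nijenhuis operator. -/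

import Mathlib

/-!
Expanding `φ_λ [x, y, z]_λ = [φ_λ x, φ_λ y, φ_λ z]` in powers of `λ` gives a cubic polynomial in `λ`
with coefficients in `g` and no constant term, vanishing for every `λ`. Evaluating at `λ = 1, -1, 2`
shows that all three coefficients vanish as soon as `2` and `3` are invertible: these are
identities (1), (2) and (3). Applying `N` to (1) and substituting (2) gives the second Nijenhuis
identity.
-/

def IsNijenhuis {F : Type*} [Field F] {g : Type*} [AddCommGroup g] [Module F g]
    (t : g →ₗ[F] g →ₗ[F] g →ₗ[F] g) (N : Module.End F g) : Prop :=
  (∀ x y z : g, t (N x) (N y) (N z) = 0) ∧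
  (∀ x y z : g,
    N (N (t x y z)) =
      N (t (N x) y z) + N (t x (N y) z) + N (t x y (N z)) -
        t (N x) (N y) z - t (N x) y (N z) - t x (N y) (N z))

theorem eq_zero_of_forall_smul_add_sq_smul_add_cube_smul_eq_zero {F M : Type*} [Field F]
    [AddCommGroup M] [Module F M] (h2 : (2 : F) ≠ 0) (h3 : (3 : F) ≠ 0) {u v w : M}
    (h : ∀ a : F, a • u + a ^ 2 • v + a ^ 3 • w = 0) : u = 0 ∧ v = 0 ∧ w = 0 := by
  have hone := h 1
  have hneg := h (-1)
  have htwo := h 2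
  have hv : v = 0 := by
    refine (smul_eq_zero.mp ?_).resolve_left h2
    linear_combination (norm := module) hone + hneg
  have hw : w = 0 := by
    refine (smul_eq_zero.mp ?_).resolve_left (mul_ne_zero h2 h3 : (2 * 3 : F) ≠ 0)
    linear_combination (norm := module) htwo - (2 : F) • hone - (2 : F) • hv
  refine ⟨?_, hv, hw⟩
  linear_combination (norm := module) hone - hv - hw

section

variable {F : Type*} [Field F] {g : Type*} [AddCommGroup g] [Module F g]
  (t ω : g →ₗ[F] g →ₗ[F] g →ₗ[F] g) (N : Module.End F g)

theorem cubic_expansion_of_map_deformed_bracket (lam : F) (x y z : g)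
    (h : (t x y z + lam • ω x y z) + lam • N (t x y z + lam • ω x y z) =
      t (x + lam • N x) (y + lam • N y) (z + lam • N z)) :
    lam • (t (N x) y z + t x (N y) z + t x y (N z) - N (t x y z) - ω x y z)
      + lam ^ 2 • (t (N x) (N y) z + t (N x) y (N z) + t x (N y) (N z) - N (ω x y z))
      + lam ^ 3 • t (N x) (N y) (N z) = 0 := by
  simp only [map_add, map_smul, LinearMap.add_apply, LinearMap.smul_apply] at h
  linear_combination (norm := module) -h

theorem isNijenhuis_of_eq_of_map_eq
    (h₁ : ∀ x y z : g,
      ω x y z = t (N x) y z + t x (N y) z + t x y (N z) - N (t x y z))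
    (h₂ : ∀ x y z : g,
      N (ω x y z) = t (N x) (N y) z + t (N x) y (N z) + t x (N y) (N z))
    (h₃ : ∀ x y z : g, t (N x) (N y) (N z) = 0) :
    IsNijenhuis t N := by
  refine ⟨h₃, fun x y z => ?_⟩
  have hN := congrArg N (h₁ x y z)
  simp only [map_add, map_sub] at hN
  linear_combination (norm := module) hN - h₂ x y z

end

theorem trivial_deformation_gives_nijenhuis_general {F : Type*} [Field F]
    (hchar2 : (2 : F) ≠ 0) (hchar3 : (3 : F) ≠ 0)
    {g : Type*} [AddCommGroup g] [Module F g]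
    (t : g →ₗ[F] g →ₗ[F] g →ₗ[F] g)
    (ω : g →ₗ[F] g →ₗ[F] g →ₗ[F] g)
    (N : Module.End F g)
    (hhom : ∀ (lam : F) (x y z : g),
      (t x y z + lam • ω x y z) + lam • N (t x y z + lam • ω x y z) =
        t (x + lam • N x) (y + lam • N y) (z + lam • N z)) :
    (∀ x1 x2 x3 : g,
      ω x1 x2 x3 =
        t (N x1) x2 x3 + t x1 (N x2) x3 + t x1 x2 (N x3) - N (t x1 x2 x3)) ∧
    (∀ x1 x2 x3 : g,
      N (ω x1 x2 x3) =
        t (N x1) (N x2) x3 + t (N x1) x2 (N x3) + t x1 (N x2) (N x3)) ∧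
    (∀ x1 x2 x3 : g, t (N x1) (N x2) (N x3) = 0) ∧
    IsNijenhuis t N := by
  have coeffs (x y z : g) :=
    eq_zero_of_forall_smul_add_sq_smul_add_cube_smul_eq_zero hchar2 hchar3 fun lam =>
      cubic_expansion_of_map_deformed_bracket t ω N lam x y z (hhom lam x y z)
  have h₁ (x y z : g) := (sub_eq_zero.mp (coeffs x y z).1).symm
  have h₂ (x y z : g) := (sub_eq_zero.mp (coeffs x y z).2.1).symm
  have h₃ (x y z : g) := (coeffs x y z).2.2
  exact ⟨h₁, h₂, h₃, isNijenhuis_of_eq_of_map_eq t ω N h₁ h₂ h₃⟩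

theorem trivial_deformation_gives_nijenhuis {F : Type*} [Field F] [Infinite F]
    (hchar2 : (2 : F) ≠ 0) (hchar3 : (3 : F) ≠ 0)
    {g : Type*} [AddCommGroup g] [Module F g]
    (t : g →ₗ[F] g →ₗ[F] g →ₗ[F] g)
    (hskew : ∀ x y : g, t x x y = 0)
    (hjac : ∀ x y z : g, t x y z + t y z x + t z x y = 0)
    (hfund : ∀ x y a b c : g,
      t x y (t a b c) = t (t x y a) b c + t a (t x y b) c + t a b (t x y c))
    (ω : g →ₗ[F] g →ₗ[F] g →ₗ[F] g)
    (hdef : ∀ (lam : F) (b : g → g → g → g),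
      (∀ x y z : g, b x y z = t x y z + lam • ω x y z) →
      ((∀ x y : g, b x x y = 0) ∧
       (∀ x y z : g, b x y z + b y z x + b z x y = 0) ∧
       (∀ x1 x2 y1 y2 y3 : g,
         b x1 x2 (b y1 y2 y3) =
           b (b x1 x2 y1) y2 y3 + b y1 (b x1 x2 y2) y3 + b y1 y2 (b x1 x2 y3))))
    (N : Module.End F g)
    (hhom : ∀ (lam : F) (x y z : g),
      (t x y z + lam • ω x y z) + lam • N (t x y z + lam • ω x y z) =
        t (x + lam • N x) (y + lam • N y) (z + lam • N z)) :
    (∀ x1 x2 x3 : g,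
      ω x1 x2 x3 =
        t (N x1) x2 x3 + t x1 (N x2) x3 + t x1 x2 (N x3) - N (t x1 x2 x3)) ∧
    (∀ x1 x2 x3 : g,
      N (ω x1 x2 x3) =
        t (N x1) (N x2) x3 + t (N x1) x2 (N x3) + t x1 (N x2) (N x3)) ∧
    (∀ x1 x2 x3 : g, t (N x1) (N x2) (N x3) = 0) ∧
    IsNijenhuis t N :=
  trivial_deformation_gives_nijenhuis_general hchar2 hchar3 t ω N hhom
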